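/- Let d ≥ 2. Let g : ℝ → ℝ be even, continuously differentiable and compactly supported, and put f(x) := g(‖x‖), x ∈ ℝ^d. Then for every x ∈ ℝ^d with x ≠ 0, ‖x‖^{d−1}·|f(x)| ≤ ω_{d−1}^{−1} ∫_{{y : ‖y‖ ≥ ‖x‖}} ‖∇f(y)‖ dy ≤ ω_{d−1}^{−1} ∫_{ℝ^d} ‖∇f(y)‖ dy. -/

import Mathlib

open MeasureTheory

set_option maxHeartbeats 1000000 in
/-- For `d ≥ 2` and `g : ℝ → ℝ` even, `C^1` and compactly supported, the radial extension
`f(x) = g(‖x‖)` satisfies, for every `x ≠ 0`,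
`‖x‖^{d−1}·|f(x)| ≤ ω_{d−1}⁻¹ ∫_{‖y‖ ≥ ‖x‖} ‖∇f(y)‖ dy ≤ ω_{d−1}⁻¹ ∫_{ℝ^d} ‖∇f(y)‖ dy`,
where `ω_{d−1} = d·vol(B(0,1))` is the surface area of the unit sphere in `ℝ^d`. -/
theorem stmt_5 (d : ℕ) (hd : 2 ≤ d) (g : ℝ → ℝ)
    (heven : ∀ t : ℝ, g (-t) = g t) (hg : ContDiff ℝ 1 g) (hsupp : HasCompactSupport g)
    (x : EuclideanSpace ℝ (Fin d)) (hx : x ≠ 0) :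
    ‖x‖ ^ (d - 1) * |g ‖x‖| ≤
        (d * (volume (Metric.ball (0 : EuclideanSpace ℝ (Fin d)) 1)).toReal)⁻¹ *
          ∫ y in {y : EuclideanSpace ℝ (Fin d) | ‖x‖ ≤ ‖y‖},
            ‖gradient (fun z : EuclideanSpace ℝ (Fin d) => g ‖z‖) y‖ ∧
      (d * (volume (Metric.ball (0 : EuclideanSpace ℝ (Fin d)) 1)).toReal)⁻¹ *
          ∫ y in {y : EuclideanSpace ℝ (Fin d) | ‖x‖ ≤ ‖y‖},
            ‖gradient (fun z : EuclideanSpace ℝ (Fin d) => g ‖z‖) y‖ ≤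
        (d * (volume (Metric.ball (0 : EuclideanSpace ℝ (Fin d)) 1)).toReal)⁻¹ *
          ∫ y : EuclideanSpace ℝ (Fin d),
            ‖gradient (fun z : EuclideanSpace ℝ (Fin d) => g ‖z‖) y‖ := by
  haveI : Nonempty (Fin d) := ⟨⟨0, by omega⟩⟩
  set f : EuclideanSpace ℝ (Fin d) → ℝ := fun z => g ‖z‖ with hf
  set r : ℝ := ‖x‖ with hrdef
  have hr : 0 < r := norm_pos_iff.mpr hx
  have hgd : Differentiable ℝ g := hg.differentiable one_ne_zero
  have hg' : Continuous (deriv g) := hg.continuous_deriv le_rfl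
  -- the norm of the gradient
  have hgrad : ∀ y : EuclideanSpace ℝ (Fin d), y ≠ 0 → ‖gradient f y‖ = |deriv g ‖y‖| := by
    intro y hy
    have hn : DifferentiableAt ℝ (fun z : EuclideanSpace ℝ (Fin d) => ‖z‖) y :=
      (contDiffAt_norm (𝕜 := ℝ) (n := 1) hy).differentiableAt one_ne_zero
    have hcomp : HasFDerivAt f
        ((deriv g ‖y‖) • fderiv ℝ (fun z : EuclideanSpace ℝ (Fin d) => ‖z‖) y) y :=
      ((hgd ‖y‖).hasDerivAt).comp_hasFDerivAt y hn.hasFDerivAt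
    rw [gradient, hcomp.fderiv, LinearIsometryEquiv.norm_map, norm_smul,
      norm_fderiv_norm hn, Real.norm_eq_abs, mul_one]
  -- auxiliary functions
  set F : ℝ → ℝ := fun t => t ^ (d - 1) * |deriv g t| with hF
  have hFc : Continuous F := (continuous_pow _).mul hg'.abs
  have hFsupp : HasCompactSupport F := by
    have h1 : HasCompactSupport (fun t => |deriv g t|) :=
      (hsupp.deriv).comp_left (g := abs) abs_zero
    exact h1.mul_left
  have hFint : Integrable F := hFc.integrable_of_hasCompactSupport hFsupp
  have hFnn : ∀ t ∈ Set.Ici r, 0 ≤ F t := fun t ht =>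
    mul_nonneg (pow_nonneg (le_trans hr.le ht) _) (abs_nonneg _)
  set ω : ℝ := d * (volume (Metric.ball (0 : EuclideanSpace ℝ (Fin d)) 1)).toReal with hω
  have hωpos : 0 < ω := by
    apply mul_pos (by positivity)
    exact ENNReal.toReal_pos (Metric.measure_ball_pos volume 0 one_pos).ne'
      measure_ball_lt_top.ne
  -- the set integral via polar coordinates
  have hSmeas : MeasurableSet {y : EuclideanSpace ℝ (Fin d) | r ≤ ‖y‖} :=
    (isClosed_le continuous_const continuous_norm).measurableSet
  have hpt : ∀ y : EuclideanSpace ℝ (Fin d),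
      Set.indicator {y : EuclideanSpace ℝ (Fin d) | r ≤ ‖y‖} (fun y => ‖gradient f y‖) y
        = Set.indicator (Set.Ici r) (fun t => |deriv g t|) ‖y‖ := by
    intro y
    by_cases hy : r ≤ ‖y‖
    · have hy0 : y ≠ 0 := by
        intro h; rw [h, norm_zero] at hy; linarith
      rw [Set.indicator_of_mem (show y ∈ {y : EuclideanSpace ℝ (Fin d) | r ≤ ‖y‖} from hy),
        Set.indicator_of_mem (Set.mem_Ici.mpr hy), hgrad y hy0]
    · rw [Set.indicator_of_notMem
        (show y ∉ {y : EuclideanSpace ℝ (Fin d) | r ≤ ‖y‖} from hy),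
        Set.indicator_of_notMem (fun h => hy (Set.mem_Ici.mp h))]
  have hIS : ∫ y in {y : EuclideanSpace ℝ (Fin d) | r ≤ ‖y‖}, ‖gradient f y‖
      = ω * ∫ t in Set.Ici r, F t := by
    rw [← integral_indicator hSmeas]
    calc ∫ y : EuclideanSpace ℝ (Fin d),
          Set.indicator {y : EuclideanSpace ℝ (Fin d) | r ≤ ‖y‖} (fun y => ‖gradient f y‖) y
        = ∫ y : EuclideanSpace ℝ (Fin d),
            Set.indicator (Set.Ici r) (fun t => |deriv g t|) ‖y‖ :=
          integral_congr_ae (Filter.Eventually.of_forall hpt)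
      _ = Module.finrank ℝ (EuclideanSpace ℝ (Fin d)) •
            (volume (Metric.ball (0 : EuclideanSpace ℝ (Fin d)) 1)).toReal •
            ∫ t in Set.Ioi (0:ℝ), t ^ (Module.finrank ℝ (EuclideanSpace ℝ (Fin d)) - 1) •
              Set.indicator (Set.Ici r) (fun t => |deriv g t|) t :=
          integral_fun_norm_addHaar volume _
      _ = ω * ∫ t in Set.Ici r, F t := by
          rw [nsmul_eq_mul, smul_eq_mul, ← mul_assoc]
          have hfr : Module.finrank ℝ (EuclideanSpace ℝ (Fin d)) = d := finrank_euclideanSpace_fin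
          rw [hfr]
          congr 1
          have heq : ∀ t : ℝ, t ^ (d - 1) •
              Set.indicator (Set.Ici r) (fun t => |deriv g t|) t
                = Set.indicator (Set.Ici r) F t := by
            intro t
            by_cases h : t ∈ Set.Ici r
            · rw [Set.indicator_of_mem h, Set.indicator_of_mem h, smul_eq_mul]
            · rw [Set.indicator_of_notMem h, Set.indicator_of_notMem h, smul_zero]
          simp_rw [heq]
          rw [setIntegral_indicator measurableSet_Ici]
          have hss : Set.Ioi (0:ℝ) ∩ Set.Ici r = Set.Ici r :=
            Set.inter_eq_self_of_subset_right (fun t ht => lt_of_lt_of_le hr ht)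
          rw [hss]
  -- key scalar inequality
  have hkey : r ^ (d - 1) * |g r| ≤ ∫ t in Set.Ici r, F t := by
    obtain ⟨R, hR0, hR⟩ := hsupp.exists_pos_le_norm
    set M : ℝ := max r R with hM
    have hrM : r ≤ M := le_max_left _ _
    have hM0 : 0 < M := lt_of_lt_of_le hr hrM
    have hgM : g M = 0 := hR M (by rw [Real.norm_eq_abs, abs_of_pos hM0]; exact le_max_right _ _)
    have hftc : ∫ t in r..M, deriv g t = g M - g r :=
      intervalIntegral.integral_deriv_eq_sub (fun t _ => hgd t)
        (hg'.intervalIntegrable _ _)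
    have h1 : |g r| ≤ ∫ t in r..M, |deriv g t| := by
      calc |g r| = |∫ t in r..M, deriv g t| := by rw [hftc, hgM, zero_sub, abs_neg]
        _ ≤ ∫ t in r..M, |deriv g t| :=
          intervalIntegral.abs_integral_le_integral_abs hrM
    have h2 : r ^ (d - 1) * |g r| ≤ ∫ t in r..M, F t := by
      calc r ^ (d - 1) * |g r| ≤ r ^ (d - 1) * ∫ t in r..M, |deriv g t| :=
            mul_le_mul_of_nonneg_left h1 (pow_nonneg hr.le _)
        _ = ∫ t in r..M, r ^ (d - 1) * |deriv g t| := by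
            rw [intervalIntegral.integral_const_mul]
        _ ≤ ∫ t in r..M, F t := by
            apply intervalIntegral.integral_mono_on hrM
            · exact (Continuous.intervalIntegrable (by continuity) _ _)
            · exact hFc.intervalIntegrable _ _
            · intro t ht
              exact mul_le_mul_of_nonneg_right
                (pow_le_pow_left₀ hr.le ht.1 _) (abs_nonneg _)
    have h3 : ∫ t in r..M, F t ≤ ∫ t in Set.Ici r, F t := by
      rw [intervalIntegral.integral_of_le hrM]
      apply setIntegral_mono_set hFint.integrableOn
        ((ae_restrict_iff' measurableSet_Ici).mpr (Filter.Eventually.of_forall hFnn))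
      exact Filter.Eventually.of_forall (fun t ht => ht.1.le)
    linarith
  -- integrability of the gradient norm on the whole space
  have hK : Integrable (fun y : EuclideanSpace ℝ (Fin d) => ‖gradient f y‖) := by
    have hKc : Continuous (fun y : EuclideanSpace ℝ (Fin d) => |deriv g ‖y‖|) :=
      hg'.abs.comp continuous_norm
    have hKsupp : HasCompactSupport (fun y : EuclideanSpace ℝ (Fin d) => |deriv g ‖y‖|) := by
      obtain ⟨R, hR0, hR⟩ := (hsupp.deriv).exists_pos_le_norm
      apply HasCompactSupport.intro (isCompact_closedBall (0 : EuclideanSpace ℝ (Fin d)) R)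
      intro y hy
      simp only [Metric.mem_closedBall, dist_zero_right, not_le] at hy
      rw [hR ‖y‖ (by rw [Real.norm_eq_abs, abs_of_nonneg (norm_nonneg y)]; exact hy.le),
        abs_zero]
    have h0 : ∀ᵐ y : EuclideanSpace ℝ (Fin d) ∂volume, y ≠ 0 := by
      rw [ae_iff]
      simp only [not_not, Set.setOf_eq_eq_singleton]
      exact measure_singleton 0
    refine (hKc.integrable_of_hasCompactSupport hKsupp).congr ?_
    filter_upwards [h0] with y hy
    exact (hgrad y hy).symm
  constructor
  · rw [hIS, inv_mul_cancel_left₀ hωpos.ne']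
    exact hkey
  · exact mul_le_mul_of_nonneg_left
      (setIntegral_le_integral hK (Filter.Eventually.of_forall fun y => norm_nonneg _))
      (inv_nonneg.mpr hωpos.le)
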